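/- arXiv:1810.11790 — 2 statements merged into one kernel-verified Lean document; each statement's English description precedes it below -/
import Mathlib

section
/- Let μ satisfy the one-sided Lipschitz condition with constant c, let h > 0 with c·h < 1/2, and define μ_h(x) = μ(F_h(x)) where F_h(x) is the unique solution of y = x + h·μ(y). Then μ_h is one-sided Lipschitz: ⟨x − x', μ_h(x) − μ_h(x')⟩ ≤ c(1 − c·h)^{-1} |x − x'|² for all x, x'. -/
/-!
Write `u = F x - F x'`, `v = μ (F x) - μ (F x')`, so that `x - x' = u - h • v`, and put
`z = c • u - v`. Then `c • (x - x') - (1 - c * h) • v = z` and `x - x' = (1 - c * h) • u + h • z`,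
hence
`c ‖x - x'‖² - (1 - c h) ⟪x - x', v⟫ = ⟪x - x', z⟫ = (1 - c h) ⟪u, z⟫ + h ‖z‖²`,
which is nonnegative because `⟪u, z⟫ ≥ 0` is exactly the one-sided Lipschitz bound for `μ`.
-/

open RealInnerProductSpace

section OneSidedLipschitz

variable {E : Type*} [NormedAddCommGroup E] [InnerProductSpace ℝ E]

theorem mul_inner_sub_smul_le {u v : E} {c h : ℝ} (hh : 0 ≤ h) (hch : c * h ≤ 1)
    (huv : ⟪u, v⟫ ≤ c * ‖u‖ ^ 2) :
    (1 - c * h) * ⟪u - h • v, v⟫ ≤ c * ‖u - h • v‖ ^ 2 := by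
  set z := c • u - v
  have hz : 0 ≤ ⟪u, z⟫ := by
    rw [inner_sub_right, real_inner_smul_right, real_inner_self_eq_norm_sq]
    linarith
  have hw : u - h • v = (1 - c * h) • u + h • z := by module
  have hcw : c • (u - h • v) - (1 - c * h) • v = z := by module
  have key : c * ‖u - h • v‖ ^ 2 - (1 - c * h) * ⟪u - h • v, v⟫
      = (1 - c * h) * ⟪u, z⟫ + h * ‖z‖ ^ 2 := by
    calc c * ‖u - h • v‖ ^ 2 - (1 - c * h) * ⟪u - h • v, v⟫
        = ⟪u - h • v, c • (u - h • v) - (1 - c * h) • v⟫ := by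
          rw [inner_sub_right, real_inner_smul_right, real_inner_smul_right,
            real_inner_self_eq_norm_sq]
      _ = (1 - c * h) * ⟪u, z⟫ + h * ‖z‖ ^ 2 := by
          rw [hcw, hw, inner_add_left, real_inner_smul_left, real_inner_smul_left,
            real_inner_self_eq_norm_sq]
  linarith [mul_nonneg (sub_nonneg.2 hch) hz, mul_nonneg hh (sq_nonneg ‖z‖)]

theorem inner_sub_smul_le {u v : E} {c h : ℝ} (hh : 0 ≤ h) (hch : c * h < 1)
    (huv : ⟪u, v⟫ ≤ c * ‖u‖ ^ 2) :
    ⟪u - h • v, v⟫ ≤ c * (1 - c * h)⁻¹ * ‖u - h • v‖ ^ 2 := by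
  have hpos : 0 < 1 - c * h := sub_pos.2 hch
  rw [mul_right_comm, ← div_eq_mul_inv, le_div_iff₀' hpos]
  exact mul_inner_sub_smul_le hh hch.le huv

theorem inner_sub_comp_resolvent_le {μ F : E → E} {c h : ℝ}
    (hμ : ∀ x y, ⟪x - y, μ x - μ y⟫ ≤ c * ‖x - y‖ ^ 2) (hh : 0 ≤ h) (hch : c * h < 1)
    (hF : ∀ x, F x = x + h • μ (F x)) (x x' : E) :
    ⟪x - x', μ (F x) - μ (F x')⟫ ≤ c * (1 - c * h)⁻¹ * ‖x - x'‖ ^ 2 := by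
  have hx : x - x' = (F x - F x') - h • (μ (F x) - μ (F x')) := by
    linear_combination (norm := module) hF x' - hF x
  rw [hx]
  exact inner_sub_smul_le hh hch (hμ (F x) (F x'))

end OneSidedLipschitz

theorem ssbe_perturbed_drift_one_sided_lipschitz (d : ℕ)
    (μ : EuclideanSpace ℝ (Fin d) → EuclideanSpace ℝ (Fin d)) (c : ℝ)
    (hμ : ∀ x y : EuclideanSpace ℝ (Fin d),
      inner ℝ (x - y) (μ x - μ y) ≤ c * ‖x - y‖ ^ 2)
    (h : ℝ) (hh : 0 < h) (hch : c * h < 1 / 2)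
    (F : EuclideanSpace ℝ (Fin d) → EuclideanSpace ℝ (Fin d))
    (hF : ∀ x, F x = x + h • μ (F x)) :
    ∀ x x' : EuclideanSpace ℝ (Fin d),
      inner ℝ (x - x') (μ (F x) - μ (F x')) ≤ c * (1 - c * h)⁻¹ * ‖x - x'‖ ^ 2 :=
  inner_sub_comp_resolvent_le hμ hh.le (by linarith) hF
end

section
/- Fix ε > 0, L ∈ ℕ, step sizes h_l > 0 and variances V_l > 0 for l = 0, …, L. Among all positive real choices of (M_l) subject to the constraint Σ_{l=0}^{L} V_l / M_l ≤ ε²/2, the computational cost Σ_{l=0}^{L} M_l / h_l is minimized by M_l = 2 ε^{−2} √(V_l h_l) · Σ_{i=0}^{L} √(V_i / h_i), and the minimal cost equals 2 ε^{−2} (Σ_{i=0}^{L} √(V_i / h_i))². -/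
/-!
Writing `S = ∑ √(V_l / h_l)`, Cauchy–Schwarz applied to `√(V_l / M_l) · √(M_l / h_l)` gives
`S² ≤ (∑ V_l / M_l) (∑ M_l / h_l)` for every positive allocation `M`, so the variance constraint forces
the cost to be at least `2 ε⁻² S²`. The allocation `M_l ∝ √(V_l h_l)` is the equality case, and its
normalising constant is chosen so that the constraint is tight.
-/

open Finset

namespace Real

lemma div_sqrt_mul {a b : ℝ} (ha : 0 ≤ a) (hb : 0 ≤ b) : a / √(a * b) = √(a / b) := by
  rw [sqrt_mul ha, sqrt_div' _ hb, div_mul_eq_div_div, div_sqrt]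

lemma sqrt_mul_div_self (a : ℝ) {b : ℝ} (hb : 0 ≤ b) : √(a * b) / b = √(a / b) := by
  rw [sqrt_mul' _ hb, mul_div_assoc, sqrt_div_self, ← div_eq_mul_inv, sqrt_div' _ hb]

end Real

variable {ι : Type*} (s : Finset ι) {V h : ι → ℝ}

lemma sq_sum_sqrt_div_le_mul_sum {M : ι → ℝ} (hV : ∀ i ∈ s, 0 ≤ V i) (hh : ∀ i ∈ s, 0 ≤ h i)
    (hM : ∀ i ∈ s, 0 < M i) :
    (∑ i ∈ s, √(V i / h i)) ^ 2 ≤ (∑ i ∈ s, V i / M i) * ∑ i ∈ s, M i / h i :=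
  sum_sq_le_sum_mul_sum_of_sq_le_mul s
    (fun i hi ↦ div_nonneg (hV i hi) (hM i hi).le)
    (fun i hi ↦ div_nonneg (hM i hi).le (hh i hi))
    fun i hi ↦ by
      rw [Real.sq_sqrt (div_nonneg (hV i hi) (hh i hi)), div_mul_div_cancel₀ (hM i hi).ne']

lemma sum_div_const_mul_sqrt_mul (c : ℝ) (hV : ∀ i ∈ s, 0 ≤ V i) (hh : ∀ i ∈ s, 0 ≤ h i) :
    ∑ i ∈ s, V i / (c * √(V i * h i)) = (∑ i ∈ s, √(V i / h i)) / c := by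
  rw [sum_div]
  refine sum_congr rfl fun i hi ↦ ?_
  rw [mul_comm c, ← div_div, Real.div_sqrt_mul (hV i hi) (hh i hi)]

lemma sum_const_mul_sqrt_mul_div (c : ℝ) (hh : ∀ i ∈ s, 0 ≤ h i) :
    ∑ i ∈ s, c * √(V i * h i) / h i = c * ∑ i ∈ s, √(V i / h i) := by
  rw [mul_sum]
  refine sum_congr rfl fun i hi ↦ ?_
  rw [mul_div_assoc, Real.sqrt_mul_div_self _ (hh i hi)]

open Finset in
theorem mlmc_optimal_paths (ε : ℝ) (hε : 0 < ε) (L : ℕ)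
    (h V : Fin (L + 1) → ℝ) (hh : ∀ l, 0 < h l) (hV : ∀ l, 0 < V l)
    (Mopt : Fin (L + 1) → ℝ)
    (hMopt : ∀ l, Mopt l =
      2 * ε ^ (-2 : ℤ) * Real.sqrt (V l * h l) * ∑ i, Real.sqrt (V i / h i)) :
    (∑ l, V l / Mopt l ≤ ε ^ 2 / 2) ∧
    (∀ M : Fin (L + 1) → ℝ, (∀ l, 0 < M l) → ∑ l, V l / M l ≤ ε ^ 2 / 2 →
      ∑ l, Mopt l / h l ≤ ∑ l, M l / h l) ∧
    (∑ l, Mopt l / h l = 2 * ε ^ (-2 : ℤ) * (∑ i, Real.sqrt (V i / h i)) ^ 2) := by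
  set S := ∑ i, √(V i / h i) with hSdef
  have hS : 0 < S := sum_pos (fun i _ ↦ Real.sqrt_pos.2 (div_pos (hV i) (hh i))) univ_nonempty
  have hV₀ : ∀ i ∈ univ, 0 ≤ V i := fun i _ ↦ (hV i).le
  have hh₀ : ∀ i ∈ univ, 0 ≤ h i := fun i _ ↦ (hh i).le
  have hεz : ε ^ (-2 : ℤ) = (ε ^ 2)⁻¹ := by rw [zpow_neg, zpow_ofNat]
  obtain rfl : Mopt = fun l ↦ 2 * ε ^ (-2 : ℤ) * S * √(V l * h l) := by
    funext l; rw [hMopt l]; ring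
  have hcost : ∑ l, 2 * ε ^ (-2 : ℤ) * S * √(V l * h l) / h l = 2 * ε ^ (-2 : ℤ) * S ^ 2 := by
    rw [sum_const_mul_sqrt_mul_div _ _ hh₀]; ring
  refine ⟨?_, fun M hM hMε ↦ ?_, hcost⟩
  · rw [sum_div_const_mul_sqrt_mul _ _ hV₀ hh₀, ← hSdef, hεz]
    exact le_of_eq (by field_simp)
  · have hCS := sq_sum_sqrt_div_le_mul_sum univ hV₀ hh₀ fun i _ ↦ hM i
    have hcost_nonneg : 0 ≤ ∑ l, M l / h l := sum_nonneg fun l _ ↦ (div_pos (hM l) (hh l)).le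
    calc ∑ l, 2 * ε ^ (-2 : ℤ) * S * √(V l * h l) / h l
        = 2 * (ε ^ 2)⁻¹ * S ^ 2 := by rw [hcost, hεz]
      _ ≤ 2 * (ε ^ 2)⁻¹ * (ε ^ 2 / 2 * ∑ l, M l / h l) := by
          gcongr; exact hCS.trans (mul_le_mul_of_nonneg_right hMε hcost_nonneg)
      _ = ∑ l, M l / h l := by field_simp
end
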